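/- Let M be a matroid with independent sets ℱ and rank function r on a finite ground set 𝒳, and let ≻ be a strict linear order on 𝒳. There exists exactly one choice rule C on 𝒳 satisfying all of: (i) feasibility: C(A) ∈ ℱ for every A ⊆ 𝒳; (ii) rank maximality: r(C(A)) = r(A) for every A ⊆ 𝒳; (iii) no justified envy under rank: for every A ⊆ 𝒳, x ∈ C(A), and y ∈ A \ C(A), if y ≻ x then r((C(A) \ {x}) ∪ {y}) < r(C(A)). -/

import Mathlib

/-- A matroid on the finite ground set `α`, given by its independent sets. -/
structure FinMatroid (α : Type*) [DecidableEq α] where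
  Indep : Finset α → Prop
  indep_empty : Indep ∅
  indep_subset : ∀ ⦃A B : Finset α⦄, Indep B → A ⊆ B → Indep A
  indep_exchange : ∀ ⦃A B : Finset α⦄, Indep A → Indep B → A.card < B.card →
    ∃ x ∈ B, x ∉ A ∧ Indep (insert x A)

open Classical in
/-- The rank of a set: the common cardinality of its maximal independent
subsets. -/
noncomputable def FinMatroid.rank {α : Type*} [DecidableEq α]
    (M : FinMatroid α) (X : Finset α) : ℕ :=
  (X.powerset.filter fun A => M.Indep A).sup Finset.card

/-- `Y` is a basis of `X`: a maximal independent subset of `X`. -/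
def FinMatroid.IsBasisOf {α : Type*} [DecidableEq α]
    (M : FinMatroid α) (Y X : Finset α) : Prop :=
  Y ⊆ X ∧ M.Indep Y ∧ ∀ Z : Finset α, Z ⊆ X → M.Indep Z → Y ⊆ Z → Z = Y

/-!
Call `D` greedy for `A` if every `y` lies in `D` exactly when `y ∈ A` and `y`, together with
the elements of `D` above it, is independent. This recursion from the top determines `D`:
two solutions agree above the largest element where they differ, hence also at it.
A greedy `D` is independent (it is the set attached to its own minimum) and maximal in `A`,
so it has rank `r(A)`; and a swap of a chosen `x` for a rejected `y > x` contains the dependent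
set that rejected `y`, so it loses rank.

Conversely, let `C` satisfy (i)–(iii) and suppose `y ∈ A \ C(A)` is independent of the elements
of `C(A)` above it. Augmenting that set from `C(A)` gives an independent subset of `A` of size
`r(A)` containing `y` and all of `C(A)` but some `x < y`; it lies inside the swap of `x` for `y`,
which therefore has full rank: justified envy.
-/

namespace FinMatroid

open Finset
open scoped symmDiff

section Rank

variable {α : Type*} [DecidableEq α] (M : FinMatroid α)

open Classical in
theorem rank_le_card (X : Finset α) : M.rank X ≤ X.card :=
  Finset.sup_le fun _ hY => card_le_card (mem_powerset.1 (mem_filter.1 hY).1)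

variable {M}

open Classical in
theorem card_le_rank {Y X : Finset α} (hYX : Y ⊆ X) (hY : M.Indep Y) : Y.card ≤ M.rank X :=
  le_sup (f := card) (mem_filter.2 ⟨mem_powerset.2 hYX, hY⟩)

theorem Indep.rank_eq_card {X : Finset α} (hX : M.Indep X) : M.rank X = X.card :=
  le_antisymm (M.rank_le_card X) (card_le_rank subset_rfl hX)

open Classical in
theorem exists_indep_card_eq_rank (X : Finset α) :
    ∃ Y ⊆ X, M.Indep Y ∧ Y.card = M.rank X := by
  obtain ⟨Y, hY, hsup⟩ := exists_mem_eq_sup (X.powerset.filter fun A => M.Indep A)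
    ⟨∅, mem_filter.2 ⟨empty_mem_powerset X, M.indep_empty⟩⟩ card
  rw [mem_filter, mem_powerset] at hY
  exact ⟨Y, hY.1, hY.2, hsup.symm⟩

theorem rank_lt_card_of_not_indep {X : Finset α} (hX : ¬ M.Indep X) : M.rank X < X.card := by
  refine lt_of_le_of_ne (M.rank_le_card X) fun h => hX ?_
  obtain ⟨Y, hYX, hY, hcard⟩ := exists_indep_card_eq_rank (M := M) X
  rwa [← eq_of_subset_of_card_le hYX (by omega)]

theorem card_eq_rank_of_maximal {I X : Finset α} (hIX : I ⊆ X) (hI : M.Indep I)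
    (hmax : ∀ y ∈ X, y ∉ I → ¬ M.Indep (insert y I)) : I.card = M.rank X := by
  refine le_antisymm (card_le_rank hIX hI) (not_lt.1 fun hlt => ?_)
  obtain ⟨Y, hYX, hY, hcard⟩ := exists_indep_card_eq_rank (M := M) X
  obtain ⟨y, hyY, hyI, hins⟩ := M.indep_exchange hI hY (hcard ▸ hlt)
  exact hmax y (hYX hyY) hyI hins

theorem Indep.exists_augment {I D : Finset α} (hI : M.Indep I) (hD : M.Indep D) :
    ∃ J, M.Indep J ∧ I ⊆ J ∧ J ⊆ I ∪ D ∧ D.card ≤ J.card := by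
  by_cases h : D.card ≤ I.card
  · exact ⟨I, hI, subset_rfl, subset_union_left, h⟩
  obtain ⟨x, hxD, hxI, hxI'⟩ := M.indep_exchange hI hD (not_le.1 h)
  obtain ⟨J, hJ, hIJ, hJU, hcard⟩ := hxI'.exists_augment hD
  refine ⟨J, hJ, (subset_insert x I).trans hIJ, ?_, hcard⟩
  rwa [insert_union, insert_eq_of_mem (mem_union_right I hxD)] at hJU
termination_by D.card - I.card
decreasing_by rw [card_insert_of_notMem hxI]; omega

end Rank

section Greedy

variable {α : Type*} [LinearOrder α] (M : FinMatroid α)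

def IsGreedy (A D : Finset α) : Prop :=
  ∀ y, y ∈ D ↔ y ∈ A ∧ M.Indep (insert y (D.filter (y < ·)))

variable {M} {A D : Finset α}

theorem IsGreedy.subset (hD : M.IsGreedy A D) : D ⊆ A :=
  fun y hy => ((hD y).1 hy).1

theorem IsGreedy.indep (hD : M.IsGreedy A D) : M.Indep D := by
  rcases D.eq_empty_or_nonempty with rfl | hne
  · exact M.indep_empty
  have hmin : D = insert (D.min' hne) (D.filter (D.min' hne < ·)) := by
    ext z
    simp only [mem_insert, mem_filter]
    constructor
    · intro hz
      exact (D.min'_le z hz).eq_or_lt.imp Eq.symm fun hlt => ⟨hz, hlt⟩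
    · rintro (rfl | hz)
      exacts [D.min'_mem hne, hz.1]
  rw [hmin]
  exact ((hD _).1 (D.min'_mem hne)).2

theorem IsGreedy.rank_eq (hD : M.IsGreedy A D) : M.rank D = M.rank A := by
  rw [hD.indep.rank_eq_card]
  refine card_eq_rank_of_maximal hD.subset hD.indep fun y hyA hyD hins => hyD ?_
  exact (hD y).2 ⟨hyA, M.indep_subset hins (insert_subset_insert y (filter_subset _ D))⟩

theorem IsGreedy.rank_insert_erase_lt (hD : M.IsGreedy A D) {x y : α} (hx : x ∈ D)
    (hy : y ∈ A \ D) (hxy : x < y) : M.rank (insert y (D.erase x)) < M.rank D := by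
  rw [mem_sdiff] at hy
  have hdep : ¬ M.Indep (insert y (D.erase x)) := fun h => hy.2 <| (hD y).2 ⟨hy.1,
    M.indep_subset h <| insert_subset_insert y fun z hz =>
      mem_erase.2 ⟨(hxy.trans (mem_filter.1 hz).2).ne', (mem_filter.1 hz).1⟩⟩
  calc M.rank (insert y (D.erase x)) < (insert y (D.erase x)).card :=
        rank_lt_card_of_not_indep hdep
    _ = D.card := by
        rw [card_insert_of_notMem fun h => hy.2 (mem_of_mem_erase h), card_erase_add_one hx]
    _ = M.rank D := hD.indep.rank_eq_card.symm

theorem IsGreedy.eq (hD : M.IsGreedy A D) {D' : Finset α} (hD' : M.IsGreedy A D') :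
    D = D' := by
  by_contra hne
  have hs : (D ∆ D').Nonempty := symmDiff_nonempty.2 hne
  have hagree : D.filter ((D ∆ D').max' hs < ·) = D'.filter ((D ∆ D').max' hs < ·) := by
    ext z
    simp only [mem_filter]
    refine and_congr_left fun hz => not_not.1 fun h => (not_le.2 hz) ?_
    exact (D ∆ D').le_max' z (mem_symmDiff.2 (by tauto))
  have hmax := (D ∆ D').max'_mem hs
  rw [mem_symmDiff, hD, hD', hagree] at hmax
  tauto

open Classical in
theorem IsGreedy.insert_of_forall_lt (hD : M.IsGreedy A D) {a : α} (ha : ∀ x ∈ A, a < x) :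
    M.IsGreedy (insert a A) (if M.Indep (insert a D) then insert a D else D) := by
  have hDa : ∀ z ∈ D, a < z := fun z hz => ha z (hD.subset hz)
  have haD : a ∉ D := fun h => lt_irrefl a (hDa a h)
  intro y
  rcases lt_trichotomy y a with hya | rfl | hay
  · have hyD : y ∉ D := fun h => (hDa y h).asymm hya
    have hyA : y ∉ A := fun h => (ha y h).asymm hya
    split_ifs <;> simp [hya.ne, hyD, hyA]
  · have hfilter : D.filter (y < ·) = D := filter_true_of_mem hDa
    split_ifs with hI <;> simp [filter_insert, hfilter, hI, haD]
  · have hfilter : (insert a D).filter (y < ·) = D.filter (y < ·) := by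
      rw [filter_insert, if_neg (not_lt.2 hay.le)]
    split_ifs <;> simp [hfilter, hay.ne', hD y]

theorem exists_isGreedy (A : Finset α) : ∃ D, M.IsGreedy A D := by
  induction A using Finset.induction_on_min with
  | empty => exact ⟨∅, fun y => by simp⟩
  | insert a A ha ih =>
    obtain ⟨D, hD⟩ := ih
    exact ⟨_, hD.insert_of_forall_lt ha⟩

noncomputable def greedy (A : Finset α) : Finset α :=
  (exists_isGreedy (M := M) A).choose

theorem isGreedy_greedy (A : Finset α) : M.IsGreedy A (M.greedy A) :=
  (exists_isGreedy A).choose_spec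

theorem isGreedy_of_forall_rank_insert_erase_lt (hDA : D ⊆ A) (hD : M.Indep D)
    (hrank : M.rank D = M.rank A)
    (henvy : ∀ x ∈ D, ∀ y ∈ A \ D, y > x → M.rank (insert y (D.erase x)) < M.rank D) :
    M.IsGreedy A D := by
  rw [hD.rank_eq_card] at henvy hrank
  refine fun y => ⟨fun hy => ⟨hDA hy, M.indep_subset hD (insert_subset hy (filter_subset _ D))⟩,
    fun ⟨hyA, hI⟩ => not_not.1 fun hyD => ?_⟩
  obtain ⟨J, hJ, hIJ, hJU, hcard⟩ := hI.exists_augment hD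
  have hJ_sub : J ⊆ insert y D :=
    hJU.trans (union_subset (insert_subset_insert y (filter_subset _ D)) (subset_insert y D))
  have hyJ : y ∈ J := hIJ (mem_insert_self y _)
  obtain ⟨x, hxD, hxJ⟩ : ∃ x ∈ D, x ∉ J := by
    by_contra! hDJ
    have := card_le_rank (insert_subset hyA hDA) (M.indep_subset hJ (insert_subset hyJ hDJ))
    rw [card_insert_of_notMem hyD] at this
    omega
  have hxy : x < y := by
    refine lt_of_le_of_ne (not_lt.1 fun hyx => hxJ ?_) fun h => hyD (h ▸ hxD)
    exact hIJ (mem_insert_of_mem (mem_filter.2 ⟨hxD, hyx⟩))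
  have hJ_swap : J ⊆ insert y (D.erase x) := fun z hz => by
    rcases mem_insert.1 (hJ_sub hz) with rfl | hzD
    exacts [mem_insert_self z _, mem_insert_of_mem (mem_erase.2 ⟨fun h => hxJ (h ▸ hz), hzD⟩)]
  have := henvy x hxD y (mem_sdiff.2 ⟨hyA, hyD⟩) hxy
  have := card_le_rank hJ_swap hJ
  omega

end Greedy

end FinMatroid

theorem greedy_characterization_general
    {α : Type*} [LinearOrder α] (M : FinMatroid α) :
    ∃! C : Finset α → Finset α,
      (∀ A : Finset α, C A ⊆ A) ∧
      -- (i) feasibility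
      (∀ A : Finset α, M.Indep (C A)) ∧
      -- (ii) rank maximality
      (∀ A : Finset α, M.rank (C A) = M.rank A) ∧
      -- (iii) no justified envy under rank
      (∀ A : Finset α, ∀ x ∈ C A, ∀ y ∈ A \ C A,
        y > x → M.rank (insert y ((C A).erase x)) < M.rank (C A)) := by
  have hgreedy := FinMatroid.isGreedy_greedy (M := M)
  refine ⟨M.greedy, ⟨fun A => (hgreedy A).subset, fun A => (hgreedy A).indep,
    fun A => (hgreedy A).rank_eq,
    fun A _ hx _ hy hxy => (hgreedy A).rank_insert_erase_lt hx hy hxy⟩, ?_⟩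
  rintro C ⟨hsub, hindep, hrank, henvy⟩
  funext A
  exact (FinMatroid.isGreedy_of_forall_rank_insert_erase_lt (hsub A) (hindep A) (hrank A)
    (henvy A)).eq (hgreedy A)

/-- There is exactly one choice rule satisfying feasibility, rank maximality,
and no justified envy under rank (the greedy choice rule). -/
theorem greedy_characterization
    {α : Type*} [Fintype α] [LinearOrder α] (M : FinMatroid α) :
    ∃! C : Finset α → Finset α,
      (∀ A : Finset α, C A ⊆ A) ∧
      -- (i) feasibility
      (∀ A : Finset α, M.Indep (C A)) ∧
      -- (ii) rank maximality
      (∀ A : Finset α, M.rank (C A) = M.rank A) ∧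
      -- (iii) no justified envy under rank
      (∀ A : Finset α, ∀ x ∈ C A, ∀ y ∈ A \ C A,
        y > x → M.rank (insert y ((C A).erase x)) < M.rank (C A)) :=
  greedy_characterization_general M
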